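/- The fundamental trigonometric spline ts_k(x) = (1/N)[1 + 2 Σ_{j=1}^{n} C_j(x)], where C_j(x) = c_j(x)/h_j with c_j(x) = ν_j cos(j(x − x_k)) + Σ_{m=1}^{∞}[ν_{mN−j} cos((mN−j)(x − x_k)) + ν_{mN+j} cos((mN+j)(x − x_k))], h_j = ν_j + Σ_{m=1}^{∞}[ν_{mN−j} + ν_{mN+j}], and ν_j = j^{-(1+r)} with r ≥ 1, satisfies ts_k(x_m) = δ_{km} for all m = 1,...,N on the grid x_j = 2π(j-1)/N. -/

import Mathlib

/-- Dirichlet-kernel identity: for `θ = 2π l / N`, `N = 2n+1`, and `N ∤ l`, `l ≠ 0`,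
we have `1 + 2 ∑_{j=1}^n cos (j θ) = 0`. -/
lemma dirichlet_sum_eq_zero (n : ℕ) (N : ℕ) (hN : N = 2 * n + 1) (l : ℤ)
    (hl0 : l ≠ 0) (hlN : |l| < (N : ℤ)) (θ : ℝ)
    (hθ : θ = 2 * Real.pi * (l : ℝ) / (N : ℝ)) :
    1 + 2 * ∑ j ∈ Finset.Icc 1 n, Real.cos ((j : ℝ) * θ) = 0 := by
  have hNpos : 0 < (N : ℝ) := by
    have : 0 < N := by omega
    exact_mod_cast this
  have hNne : (N : ℝ) ≠ 0 := ne_of_gt hNpos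
  have hpi := Real.pi_ne_zero
  -- sin (θ/2) ≠ 0
  have hs : Real.sin (θ / 2) ≠ 0 := by
    intro hsin
    rw [Real.sin_eq_zero_iff] at hsin
    obtain ⟨q, hq⟩ := hsin
    rw [hθ] at hq
    field_simp at hq
    have h2' : ((q : ℝ) * N) * (2 * Real.pi) = (l : ℝ) * (2 * Real.pi) := by
      linear_combination (2 * Real.pi) * hq
    have h2 : (q : ℝ) * N = l :=
      mul_right_cancel₀ (by positivity) h2'
    have hlq : l = q * N := by exact_mod_cast h2.symm
    rcases eq_or_ne q 0 with hq0 | hq0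
    · exact hl0 (by simp [hlq, hq0])
    · have : (N : ℤ) ≤ |l| := by
        rw [hlq, abs_mul]
        have h1 : 1 ≤ |q| := Int.one_le_abs hq0
        have h2 : |(N : ℤ)| = (N : ℤ) := abs_of_nonneg (by positivity)
        nlinarith [abs_nonneg (N : ℤ)]
      omega
  -- telescoping identity
  have key : 2 * Real.sin (θ / 2) * ∑ j ∈ Finset.Icc 1 n, Real.cos ((j : ℝ) * θ)
      = Real.sin (((n : ℝ) + 1 / 2) * θ) - Real.sin (θ / 2) := by
    rw [Finset.mul_sum]
    have hIcc : Finset.Icc 1 n = Finset.Ico 1 (n + 1) := by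
      rw [Finset.Ico_add_one_right_eq_Icc]
    rw [hIcc, Finset.sum_Ico_eq_sum_range]
    simp only [Nat.add_sub_cancel]
    have tel := Finset.sum_range_sub (fun i : ℕ => Real.sin (((i : ℝ) + 1 / 2) * θ)) n
    simp only [Nat.cast_zero] at tel
    rw [show ((0 : ℝ) + 1 / 2) * θ = θ / 2 by ring] at tel
    rw [← tel]
    apply Finset.sum_congr rfl
    intro i _
    have hab := Real.sin_sub_sin (((i : ℝ) + 1 + 1 / 2) * θ) (((i : ℝ) + 1 / 2) * θ)
    rw [show ((((i : ℝ) + 1 + 1 / 2) * θ) - (((i : ℝ) + 1 / 2) * θ)) / 2 = θ / 2 by ring,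
      show ((((i : ℝ) + 1 + 1 / 2) * θ) + (((i : ℝ) + 1 / 2) * θ)) / 2 = ((i : ℝ) + 1) * θ
        by ring] at hab
    push_cast
    ring_nf at hab ⊢
    linarith [hab]
  -- sin ((n + 1/2) θ) = sin (l π) = 0
  have hsin0 : Real.sin (((n : ℝ) + 1 / 2) * θ) = 0 := by
    have : ((n : ℝ) + 1 / 2) * θ = (l : ℝ) * Real.pi := by
      rw [hθ, hN]
      push_cast
      field_simp
    rw [this]
    exact Real.sin_int_mul_pi l
  rw [hsin0] at key
  have hsum : ∑ j ∈ Finset.Icc 1 n, Real.cos ((j : ℝ) * θ) = -(1 / 2) := by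
    have h2s : 2 * Real.sin (θ / 2) ≠ 0 := by
      intro hcon
      apply hs
      linarith [hcon]
    have h3 : 2 * Real.sin (θ / 2) * ∑ j ∈ Finset.Icc 1 n, Real.cos ((j : ℝ) * θ)
        = 2 * Real.sin (θ / 2) * (-(1 / 2)) := by rw [key]; ring
    exact mul_left_cancel₀ h2s h3
  rw [hsum]; ring

/-- The fundamental trigonometric spline `ts_k` takes the value `δ_{km}` at the grid
nodes `x_j = 2π(j-1)/N`, `N = 2n+1`. -/
theorem fundamental_trig_spline_delta
    (n : ℕ) (hn : 1 ≤ n) (r : ℕ) (hr : 1 ≤ r)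
    (N : ℕ) (hN : N = 2 * n + 1)
    (ν : ℕ → ℝ) (hν : ∀ j, ν j = ((j : ℝ))⁻¹ ^ (1 + r))
    (x : ℕ → ℝ) (hx : ∀ j, x j = 2 * Real.pi * ((j : ℝ) - 1) / (N : ℝ))
    (k : ℕ) (hk : k ∈ Finset.Icc 1 N)
    (c : ℕ → ℝ → ℝ)
    (hc : ∀ j t, c j t = ν j * Real.cos (j * (t - x k)) + ∑' m : ℕ,
      (ν ((m + 1) * N - j) * Real.cos ((((m + 1) * N - j : ℕ) : ℝ) * (t - x k)) +
       ν ((m + 1) * N + j) * Real.cos ((((m + 1) * N + j : ℕ) : ℝ) * (t - x k))))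
    (h : ℕ → ℝ)
    (hh : ∀ j, h j = ν j + ∑' m : ℕ, (ν ((m + 1) * N - j) + ν ((m + 1) * N + j)))
    (ts : ℝ → ℝ)
    (hts : ∀ t, ts t = (1 / (N : ℝ)) * (1 + 2 * ∑ j ∈ Finset.Icc 1 n, c j t / h j))
    (m : ℕ) (hm : m ∈ Finset.Icc 1 N) :
    ts (x m) = if k = m then 1 else 0 := by
  have hNpos : 0 < (N : ℝ) := by
    have : 0 < N := by omega
    exact_mod_cast this
  have hNne : (N : ℝ) ≠ 0 := ne_of_gt hNpos
  simp only [Finset.mem_Icc] at hk hm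
  set θ : ℝ := x m - x k with hθdef
  set l : ℤ := (m : ℤ) - (k : ℤ) with hldef
  have hθ : θ = 2 * Real.pi * (l : ℝ) / (N : ℝ) := by
    rw [hθdef, hx m, hx k, show ((l : ℤ) : ℝ) = (m : ℝ) - (k : ℝ) by
      rw [hldef]; push_cast; ring]
    field_simp
    ring
  have hNθ : (N : ℝ) * θ = (l : ℝ) * (2 * Real.pi) := by
    rw [hθ]; field_simp
  -- on the grid each cosine term collapses
  have hcosplus : ∀ (p j : ℕ), Real.cos ((((p + 1) * N + j : ℕ) : ℝ) * θ)
      = Real.cos ((j : ℝ) * θ) := by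
    intro p j
    have harg : (((p + 1) * N + j : ℕ) : ℝ) * θ
        = (j : ℝ) * θ + (((p : ℤ) + 1) * l : ℤ) * (2 * Real.pi) := by
      push_cast
      linear_combination ((p : ℝ) + 1) * hNθ
    rw [harg, Real.cos_add_int_mul_two_pi]
  have hcosminus : ∀ (p j : ℕ), j ≤ N → Real.cos ((((p + 1) * N - j : ℕ) : ℝ) * θ)
      = Real.cos ((j : ℝ) * θ) := by
    intro p j hj
    have hle : j ≤ (p + 1) * N := le_trans hj (Nat.le_mul_of_pos_left N (by omega))
    have hcast : (((p + 1) * N - j : ℕ) : ℝ) = ((p : ℝ) + 1) * N - j := by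
      push_cast [Nat.cast_sub hle]
      ring
    have harg : (((p + 1) * N - j : ℕ) : ℝ) * θ
        = ((((p : ℤ) + 1) * l : ℤ) : ℝ) * (2 * Real.pi) - (j : ℝ) * θ := by
      rw [hcast]
      push_cast
      linear_combination ((p : ℝ) + 1) * hNθ
    rw [harg, Real.cos_int_mul_two_pi_sub]
  -- c j (x m) = h j * cos (j θ)
  have hkey : ∀ j ∈ Finset.Icc 1 n, c j (x m) = h j * Real.cos ((j : ℝ) * θ) := by
    intro j hj
    simp only [Finset.mem_Icc] at hj
    have hjN : j ≤ N := by omega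
    rw [hc, hh]
    have hterm : ∀ p : ℕ,
        (ν ((p + 1) * N - j) * Real.cos ((((p + 1) * N - j : ℕ) : ℝ) * θ) +
         ν ((p + 1) * N + j) * Real.cos ((((p + 1) * N + j : ℕ) : ℝ) * θ))
        = (ν ((p + 1) * N - j) + ν ((p + 1) * N + j)) * Real.cos ((j : ℝ) * θ) := by
      intro p
      rw [hcosplus p j, hcosminus p j hjN]
      ring
    rw [tsum_congr hterm, tsum_mul_right]
    ring
  -- h j > 0
  have hhpos : ∀ j ∈ Finset.Icc 1 n, 0 < h j := by
    intro j hj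
    simp only [Finset.mem_Icc] at hj
    rw [hh]
    have h1 : 0 < ν j := by
      rw [hν]
      have : 0 < (j : ℝ) := by exact_mod_cast hj.1
      positivity
    have h2 : 0 ≤ ∑' p : ℕ, (ν ((p + 1) * N - j) + ν ((p + 1) * N + j)) := by
      apply tsum_nonneg
      intro p
      have a1 : 0 ≤ ν ((p + 1) * N - j) := by rw [hν]; positivity
      have a2 : 0 ≤ ν ((p + 1) * N + j) := by rw [hν]; positivity
      linarith
    linarith
  have hquot : ∀ j ∈ Finset.Icc 1 n, c j (x m) / h j = Real.cos ((j : ℝ) * θ) := by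
    intro j hj
    rw [hkey j hj, mul_comm, mul_div_assoc, div_self (ne_of_gt (hhpos j hj)), mul_one]
  rw [hts, Finset.sum_congr rfl hquot]
  by_cases hkm : k = m
  · -- θ = 0, sum = n
    have hθ0 : θ = 0 := by rw [hθdef, hkm, sub_self]
    simp only [hθ0, mul_zero, Real.cos_zero, if_pos hkm]
    rw [Finset.sum_const, Nat.card_Icc]
    simp only [Nat.add_sub_cancel, nsmul_eq_mul, mul_one]
    rw [hN]
    push_cast
    field_simp
    ring
  · have hl0 : l ≠ 0 := by
      simp only [hldef, sub_ne_zero]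
      exact_mod_cast fun hcon => hkm (by exact_mod_cast hcon.symm)
    have hlN : |l| < (N : ℤ) := by
      rw [hldef, abs_sub_lt_iff]
      omega
    have := dirichlet_sum_eq_zero n N hN l hl0 hlN θ hθ
    rw [this, if_neg hkm, mul_zero]
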